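/- arXiv:0712.3432 — 4 statements merged into one kernel-verified Lean document; each statement's English description precedes it below -/
import Mathlib

section
/- Let T₁₁,…,T₁ₙ₁ > 0 and T₂₁,…,T₂ₙ₂ > 0 be real numbers and t₁ > 0. Define Y₁(t) = #{i ≤ n₁ : T₁ᵢ ≥ t}, Y₂(t) = #{i ≤ n₂ : T₂ᵢ ≥ t} for t ≤ t₁ and Y₂(t) = 0 for t > t₁, m₂ = #{i ≤ n₂ : T₂ᵢ ≤ t₁}, and for r > 0 set U(r) = m₂ − Σ_{i=1}^{n₁} 1{T₁ᵢ ≤ r t₁} · Y₂(T₁ᵢ/r)/(Y₁(T₁ᵢ) + Y₂(T₁ᵢ/r)) − Σ_{i : T₂ᵢ ≤ t₁} Y₂(T₂ᵢ)/(Y₁(r T₂ᵢ) + Y₂(T₂ᵢ)). Then U is a non-increasing function of r on (0,∞). -/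
open Set Finset

/-! Every weight in `U` has the form `c / (a + c)` with `a, c ≥ 0`, which increases with `c` and
decreases with `a`. As `r` grows, a hot failure `T₁ᵢ` is compared with warm times `T₁ᵢ / r` that
move down, so `c = Y₂(T₁ᵢ / r)` increases (and the indicator `T₁ᵢ ≤ r t₁` can only switch on),
while a warm failure `T₂ᵢ` is compared with hot times `r T₂ᵢ` that move up, so `a = Y₁(r T₂ᵢ)`
decreases. Both sums subtracted from `m₂` therefore increase with `r`. -/

theorem div_add_le_div_add {a a' c c' : ℝ} (ha' : 0 ≤ a') (haa' : a' ≤ a) (hc : 0 ≤ c)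
    (hcc' : c ≤ c') : c / (a + c) ≤ c' / (a' + c') := by
  rcases hc.eq_or_lt with rfl | hc
  · simp only [zero_div]
    positivity
  · rw [div_le_div_iff₀ (by linarith) (by linarith)]
    nlinarith

theorem antitone_card_filter_le {ι : Type*} [Fintype ι] (T : ι → ℝ) :
    Antitone fun t => ((univ.filter fun i => t ≤ T i).card : ℝ) := fun _ _ hab =>
  Nat.cast_le.mpr <| card_le_card <| monotone_filter_right _ fun _ _ => hab.trans

theorem Antitone.ite_le_zero {f : ℝ → ℝ} (hf : Antitone f) (hf₀ : ∀ t, 0 ≤ f t) (c : ℝ) :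
    Antitone fun t => if t ≤ c then f t else 0 := by
  intro a b hab
  dsimp only
  split_ifs with hb ha ha
  · exact hf hab
  · exact absurd (hab.trans hb) ha
  · exact hf₀ a
  · exact le_rfl

theorem hot_weight_le {Y1 Y2 : ℝ → ℝ} (hY1₀ : ∀ t, 0 ≤ Y1 t) (hY2₀ : ∀ t, 0 ≤ Y2 t)
    (hY2 : Antitone Y2) {T t1 r s : ℝ} (hT : 0 ≤ T) (ht1 : 0 ≤ t1) (hr : 0 < r) (hrs : r ≤ s) :
    (if T ≤ r * t1 then Y2 (T / r) / (Y1 T + Y2 (T / r)) else 0) ≤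
      if T ≤ s * t1 then Y2 (T / s) / (Y1 T + Y2 (T / s)) else 0 := by
  have hguard : r * t1 ≤ s * t1 := mul_le_mul_of_nonneg_right hrs ht1
  split_ifs with hTr hTs hTs
  · exact div_add_le_div_add (hY1₀ T) le_rfl (hY2₀ _)
      (hY2 (div_le_div_of_nonneg_left hT hr hrs))
  · exact absurd (hTr.trans hguard) hTs
  · exact div_nonneg (hY2₀ _) (add_nonneg (hY1₀ T) (hY2₀ _))
  · exact le_rfl

theorem warm_weight_le {Y1 : ℝ → ℝ} (hY1₀ : ∀ t, 0 ≤ Y1 t) (hY1 : Antitone Y1)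
    {T r s : ℝ} (c : ℝ) (hc : 0 ≤ c) (hT : 0 ≤ T) (hrs : r ≤ s) :
    c / (Y1 (r * T) + c) ≤ c / (Y1 (s * T) + c) :=
  div_add_le_div_add (hY1₀ _) (hY1 (mul_le_mul_of_nonneg_right hrs hT)) hc le_rfl

theorem estimating_function_antitone_general
    (n1 n2 : ℕ) (T1 : Fin n1 → ℝ) (T2 : Fin n2 → ℝ)
    (hT1 : ∀ i, 0 < T1 i) (hT2 : ∀ i, 0 < T2 i)
    (t1 : ℝ) (ht1 : 0 < t1)
    (Y1 Y2 : ℝ → ℝ)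
    (hY1 : ∀ t, Y1 t = ((Finset.univ.filter (fun i : Fin n1 => t ≤ T1 i)).card : ℝ))
    (hY2 : ∀ t, Y2 t =
      if t ≤ t1 then ((Finset.univ.filter (fun i : Fin n2 => t ≤ T2 i)).card : ℝ) else 0)
    (m2 : ℝ)
    (U : ℝ → ℝ)
    (hU : ∀ r > (0:ℝ), U r = m2
      - (∑ i : Fin n1,
          if T1 i ≤ r * t1 then Y2 (T1 i / r) / (Y1 (T1 i) + Y2 (T1 i / r)) else 0)
      - (∑ i ∈ Finset.univ.filter (fun i : Fin n2 => T2 i ≤ t1),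
          Y2 (T2 i) / (Y1 (r * T2 i) + Y2 (T2 i)))) :
    AntitoneOn U (Ioi (0:ℝ)) := by
  have hY1₀ : ∀ t, 0 ≤ Y1 t := fun t => hY1 t ▸ Nat.cast_nonneg _
  have hY2₀ : ∀ t, 0 ≤ Y2 t := fun t => by rw [hY2]; split_ifs <;> positivity
  have hY1_anti : Antitone Y1 := funext hY1 ▸ antitone_card_filter_le T1
  have hY2_anti : Antitone Y2 :=
    funext hY2 ▸ (antitone_card_filter_le T2).ite_le_zero (fun _ => Nat.cast_nonneg _) t1
  intro r hr s hs hrs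
  rw [hU r hr, hU s hs]
  gcongr m2 - ?_ - ?_
  · exact sum_le_sum fun i _ =>
      hot_weight_le hY1₀ hY2₀ hY2_anti (hT1 i).le ht1.le hr hrs
  · exact sum_le_sum fun i _ => warm_weight_le hY1₀ hY1_anti _ (hY2₀ _) (hT2 i).le hrs

/-- The estimating function `U` for the scale parameter `r` of the AFT model is
non-increasing on `(0, ∞)`. -/
theorem estimating_function_antitone
    (n1 n2 : ℕ) (T1 : Fin n1 → ℝ) (T2 : Fin n2 → ℝ)
    (hT1 : ∀ i, 0 < T1 i) (hT2 : ∀ i, 0 < T2 i)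
    (t1 : ℝ) (ht1 : 0 < t1)
    (Y1 Y2 : ℝ → ℝ)
    (hY1 : ∀ t, Y1 t = ((Finset.univ.filter (fun i : Fin n1 => t ≤ T1 i)).card : ℝ))
    (hY2 : ∀ t, Y2 t =
      if t ≤ t1 then ((Finset.univ.filter (fun i : Fin n2 => t ≤ T2 i)).card : ℝ) else 0)
    (m2 : ℝ) (hm2 : m2 = ((Finset.univ.filter (fun i : Fin n2 => T2 i ≤ t1)).card : ℝ))
    (U : ℝ → ℝ)
    (hU : ∀ r > (0:ℝ), U r = m2
      - (∑ i : Fin n1,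
          if T1 i ≤ r * t1 then Y2 (T1 i / r) / (Y1 (T1 i) + Y2 (T1 i / r)) else 0)
      - (∑ i ∈ Finset.univ.filter (fun i : Fin n2 => T2 i ≤ t1),
          Y2 (T2 i) / (Y1 (r * T2 i) + Y2 (T2 i)))) :
    AntitoneOn U (Ioi (0:ℝ)) :=
  estimating_function_antitone_general n1 n2 T1 T2 hT1 hT2 t1 ht1 Y1 Y2 hY1 hY2 m2 U hU
end

section
/- Let T₁₁,…,T₁ₙ₁ > 0 and T₂₁,…,T₂ₙ₂ > 0 with n₁ ≥ 1, n₂ ≥ 1, and t₁ > 0, and suppose at least one T₂ᵢ ≤ t₁. With Y₁, Y₂, m₂ and U(r) defined by Y₁(t) = #{i : T₁ᵢ ≥ t}, Y₂(t) = #{i : T₂ᵢ ≥ t} for t ≤ t₁ and 0 for t > t₁, m₂ = #{i : T₂ᵢ ≤ t₁}, U(r) = m₂ − Σ_{i=1}^{n₁} 1{T₁ᵢ ≤ rt₁} Y₂(T₁ᵢ/r)/(Y₁(T₁ᵢ)+Y₂(T₁ᵢ/r)) − Σ_{i : T₂ᵢ ≤ t₁} Y₂(T₂ᵢ)/(Y₁(rT₂ᵢ)+Y₂(T₂ᵢ)),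 the following hold: (i) for all sufficiently small r > 0, U(r) = m₂ − Σ_{i : T₂ᵢ ≤ t₁} Y₂(T₂ᵢ)/(n₁ + Y₂(T₂ᵢ)) > 0; (ii) for all sufficiently large r, U(r) = −Σ_{i=1}^{n₁} n₂/(Y₁(T₁ᵢ) + n₂) < 0. Consequently r̂ = sup{r > 0 : U(r) > 0} is finite and strictly positive. -/
/-!
As `r → 0+`, no hot time `T₁ᵢ` lies below `r t₁` and every rescaled warm time `r T₂ᵢ` lies below
all hot times, so `U` is eventually `m₂ - Σ Y₂/(n₁ + Y₂)`, which is positive because the sum has `m₂ ≥ 1`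
terms, each `< 1`. As `r → ∞`, every `T₁ᵢ / r` is at risk in the whole warm sample and
`Y₁(r T₂ᵢ) = 0`, so the second sum becomes `m₂` and `U` is eventually `-Σ n₂/(Y₁ + n₂) < 0`.
Hence `{r > 0 | U r > 0}` is nonempty and bounded above, with positive supremum.
-/

open Set Finset Filter Topology

noncomputable def atRisk {ι : Type*} [Fintype ι] (T : ι → ℝ) (t : ℝ) : ℕ := #{i | t ≤ T i}

section atRisk

variable {ι : Type*} [Fintype ι] {T : ι → ℝ} {t : ℝ}

theorem atRisk_eq_card (h : ∀ i, t ≤ T i) : atRisk T t = Fintype.card ι := by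
  simp [atRisk, h]

theorem atRisk_eq_zero (h : ∀ i, T i < t) : atRisk T t = 0 := by
  simp [atRisk, fun i => (h i).not_ge]

theorem atRisk_pos (i : ι) : 0 < atRisk T (T i) :=
  Finset.card_pos.2 ⟨i, by simp⟩

end atRisk

theorem sum_div_const_add_lt_card {ι : Type*} {s : Finset ι} (hs : s.Nonempty) {y : ι → ℝ}
    (hy : ∀ i ∈ s, 0 ≤ y i) {c : ℝ} (hc : 0 < c) : ∑ i ∈ s, y i / (c + y i) < #s := by
  calc ∑ i ∈ s, y i / (c + y i) < ∑ _i ∈ s, (1 : ℝ) :=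
        sum_lt_sum_of_nonempty hs fun i hi => (div_lt_one (by linarith [hy i hi])).2 (by linarith)
    _ = #s := by simp

theorem bddAbove_setOf_pos_of_eventually_neg {f : ℝ → ℝ} (h : ∀ᶠ r in atTop, f r < 0) :
    BddAbove {r | 0 < r ∧ 0 < f r} := by
  obtain ⟨R, hR⟩ := eventually_atTop.1 h
  exact ⟨R, fun r hr => not_lt.1 fun hRr => (hR r hRr.le).not_gt hr.2⟩

theorem sSup_setOf_pos_pos {f : ℝ → ℝ} (hb : BddAbove {r | 0 < r ∧ 0 < f r})
    (h : ∀ᶠ r in 𝓝[>] 0, 0 < f r) : 0 < sSup {r | 0 < r ∧ 0 < f r} := by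
  obtain ⟨r, hfr, hr⟩ := (h.and self_mem_nhdsWithin).exists
  exact hr.trans_le (le_csSup hb ⟨hr, hfr⟩)

noncomputable def estimatingFunction {n1 n2 : ℕ} (T1 : Fin n1 → ℝ) (T2 : Fin n2 → ℝ)
    (t1 : ℝ) (Y1 Y2 : ℝ → ℝ) (m2 r : ℝ) : ℝ :=
  m2 - (∑ i, if T1 i ≤ r * t1 then Y2 (T1 i / r) / (Y1 (T1 i) + Y2 (T1 i / r)) else 0)
    - ∑ i with T2 i ≤ t1, Y2 (T2 i) / (Y1 (r * T2 i) + Y2 (T2 i))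

section Estimator

variable {n1 n2 : ℕ} {T1 : Fin n1 → ℝ} {T2 : Fin n2 → ℝ} {t1 : ℝ} {Y1 Y2 : ℝ → ℝ} {m2 : ℝ}

theorem estimatingFunction_eventually_eq_nhdsGT_zero (hT1 : ∀ i, 0 < T1 i)
    (hY1 : ∀ t, Y1 t = atRisk T1 t) :
    ∀ᶠ r in 𝓝[>] 0, estimatingFunction T1 T2 t1 Y1 Y2 m2 r =
      m2 - ∑ i with T2 i ≤ t1, Y2 (T2 i) / (n1 + Y2 (T2 i)) := by
  have below_T1 (c : ℝ) (j : Fin n1) : ∀ᶠ r in 𝓝[>] (0 : ℝ), r * c < T1 j := by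
    have : Tendsto (· * c) (𝓝[>] (0 : ℝ)) (𝓝 0) :=
      tendsto_nhdsWithin_of_tendsto_nhds (by simpa using (continuous_mul_const c).tendsto 0)
    exact this.eventually (eventually_lt_nhds (hT1 j))
  have hfirst : ∀ᶠ r in 𝓝[>] 0, ∀ i, ¬T1 i ≤ r * t1 :=
    eventually_all.2 fun i => (below_T1 t1 i).mono fun _ h => h.not_ge
  have hY1_full : ∀ᶠ r in 𝓝[>] 0, ∀ i, Y1 (r * T2 i) = n1 := eventually_all.2 fun i =>
    (eventually_all.2 (below_T1 (T2 i))).mono fun r h => by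
      rw [hY1, atRisk_eq_card fun j => (h j).le, Fintype.card_fin]
  filter_upwards [hfirst, hY1_full] with r hfirst hY1_full
  simp only [estimatingFunction, if_neg (hfirst _), sum_const_zero, hY1_full, sub_zero]

theorem estimatingFunction_eventually_eq_atTop (hT2 : ∀ i, 0 < T2 i) (ht1 : 0 < t1)
    (hY1 : ∀ t, Y1 t = atRisk T1 t) (hY2 : ∀ t, Y2 t = if t ≤ t1 then (atRisk T2 t : ℝ) else 0)
    (hm2 : m2 = #{i | T2 i ≤ t1}) :
    ∀ᶠ r in atTop, estimatingFunction T1 T2 t1 Y1 Y2 m2 r = -∑ i, n2 / (Y1 (T1 i) + n2) := by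
  have grows {c : ℝ} (hc : 0 < c) : Tendsto (· * c) atTop atTop := tendsto_id.atTop_mul_const hc
  have hfirst : ∀ᶠ r in atTop, ∀ i, T1 i ≤ r * t1 :=
    eventually_all.2 fun i => (grows ht1).eventually_ge_atTop (T1 i)
  have hY2_full : ∀ᶠ r in atTop, ∀ i, Y2 (T1 i / r) = n2 := eventually_all.2 fun i => by
    have h0 : Tendsto (fun r => T1 i / r) atTop (𝓝 0) := tendsto_const_nhds.div_atTop tendsto_id
    filter_upwards [h0.eventually (eventually_le_nhds ht1),
      eventually_all.2 fun j => h0.eventually (eventually_le_nhds (hT2 j))] with r hr ht2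
    rw [hY2, if_pos hr, atRisk_eq_card ht2, Fintype.card_fin]
  have hY1_empty : ∀ᶠ r in atTop, ∀ i, Y1 (r * T2 i) = 0 := eventually_all.2 fun i =>
    (eventually_all.2 fun j => (grows (hT2 i)).eventually_gt_atTop (T1 j)).mono fun r h => by
      rw [hY1, atRisk_eq_zero h, Nat.cast_zero]
  filter_upwards [hfirst, hY2_full, hY1_empty] with r hfirst hY2_full hY1_empty
  have hsecond : ∑ i with T2 i ≤ t1, Y2 (T2 i) / (Y1 (r * T2 i) + Y2 (T2 i)) = m2 := by
    rw [hm2, Finset.cast_card]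
    refine sum_congr rfl fun i hi => ?_
    have hpos : (0 : ℝ) < Y2 (T2 i) := by
      rw [hY2, if_pos (mem_filter.1 hi).2]
      exact_mod_cast atRisk_pos i
    rw [hY1_empty, zero_add, div_self hpos.ne']
  simp only [estimatingFunction, if_pos (hfirst _), hY2_full, hsecond]
  ring

end Estimator

/-- The estimating function `U` satisfies `U(0+) > 0` and `U(+∞) < 0` with the
indicated closed forms, hence the estimator `r̂ = sup{r > 0 : U(r) > 0}` is a
well-defined finite strictly positive real number. -/
theorem estimator_well_defined
    (n1 n2 : ℕ) (hn1 : 1 ≤ n1) (hn2 : 1 ≤ n2)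
    (T1 : Fin n1 → ℝ) (T2 : Fin n2 → ℝ)
    (hT1 : ∀ i, 0 < T1 i) (hT2 : ∀ i, 0 < T2 i)
    (t1 : ℝ) (ht1 : 0 < t1)
    (hobs : ∃ i : Fin n2, T2 i ≤ t1)
    (Y1 Y2 : ℝ → ℝ)
    (hY1 : ∀ t, Y1 t = ((Finset.univ.filter (fun i : Fin n1 => t ≤ T1 i)).card : ℝ))
    (hY2 : ∀ t, Y2 t =
      if t ≤ t1 then ((Finset.univ.filter (fun i : Fin n2 => t ≤ T2 i)).card : ℝ) else 0)
    (m2 : ℝ) (hm2 : m2 = ((Finset.univ.filter (fun i : Fin n2 => T2 i ≤ t1)).card : ℝ))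
    (U : ℝ → ℝ)
    (hU : ∀ r > (0:ℝ), U r = m2
      - (∑ i : Fin n1,
          if T1 i ≤ r * t1 then Y2 (T1 i / r) / (Y1 (T1 i) + Y2 (T1 i / r)) else 0)
      - (∑ i ∈ Finset.univ.filter (fun i : Fin n2 => T2 i ≤ t1),
          Y2 (T2 i) / (Y1 (r * T2 i) + Y2 (T2 i)))) :
    (∃ ε > (0:ℝ), ∀ r ∈ Ioo (0:ℝ) ε,
        U r = m2 - (∑ i ∈ Finset.univ.filter (fun i : Fin n2 => T2 i ≤ t1),
          Y2 (T2 i) / ((n1 : ℝ) + Y2 (T2 i))) ∧ 0 < U r) ∧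
    (∃ R > (0:ℝ), ∀ r > R,
        U r = -(∑ i : Fin n1, (n2 : ℝ) / (Y1 (T1 i) + (n2 : ℝ))) ∧ U r < 0) ∧
    BddAbove {r : ℝ | 0 < r ∧ 0 < U r} ∧
    0 < sSup {r : ℝ | 0 < r ∧ 0 < U r} := by
  have hsmall_pos : 0 < m2 - ∑ i with T2 i ≤ t1, Y2 (T2 i) / (n1 + Y2 (T2 i)) := by
    obtain ⟨i, hi⟩ := hobs
    rw [hm2, sub_pos]
    refine sum_div_const_add_lt_card ⟨i, by simpa using hi⟩ (fun j _ => ?_) (by exact_mod_cast hn1)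
    rw [hY2]
    split_ifs <;> positivity
  have hlarge_neg : -∑ i, n2 / (Y1 (T1 i) + n2) < 0 :=
    neg_neg_of_pos <| sum_pos (fun i _ => by rw [hY1]; positivity) (univ_nonempty_iff.2 ⟨⟨0, hn1⟩⟩)
  have hsmall : ∀ᶠ r in 𝓝[>] 0, U r = m2 - ∑ i with T2 i ≤ t1, Y2 (T2 i) / (n1 + Y2 (T2 i)) ∧
      0 < U r := by
    filter_upwards [self_mem_nhdsWithin, estimatingFunction_eventually_eq_nhdsGT_zero hT1 hY1]
      with r hr h
    have hUr := (hU r hr).trans h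
    exact ⟨hUr, hUr ▸ hsmall_pos⟩
  have hlarge : ∀ᶠ r in atTop, U r = -∑ i, n2 / (Y1 (T1 i) + n2) ∧ U r < 0 := by
    filter_upwards [eventually_gt_atTop 0,
      estimatingFunction_eventually_eq_atTop hT2 ht1 hY1 hY2 hm2] with r hr h
    have hUr := (hU r hr).trans h
    exact ⟨hUr, hUr ▸ hlarge_neg⟩
  have hbdd := bddAbove_setOf_pos_of_eventually_neg (hlarge.mono fun _ h => h.2)
  exact ⟨(nhdsGT_basis 0).eventually_iff.1 hsmall, (atTop_basis_Ioi' 0).eventually_iff.1 hlarge,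
    hbdd, sSup_setOf_pos_pos hbdd (hsmall.mono fun _ h => h.2)⟩
end

section
/- Let g : [0,∞) → [0,∞) be continuously differentiable and strictly increasing with g(0) = 0, let f₁ be a continuous probability density on [0,∞) with c.d.f. F₁(t) = ∫₀^t f₁(u) du satisfying ∫₀^∞ (1 − F₁(t)) dt < ∞, and set F₂(y) = F₁(g(y)). Let U : [0,∞) → ℝ be continuously differentiable with U(0) = 0 and compact support. Then ∫₀^∞ (∫₀^t F₁(t + g(y) − y) U'(y) dy) dt = ∫₀^∞ U(y) (F₂(y) − (g'(y) − 1)(1 − F₂(y))) dy. -/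
/-!
Write `W = 1 - F₁`. Since `U 0 = 0`, the inner integral equals `U t - ∫₀ᵗ W(t + g y - y) U'(y) dy`.
On the wedge `0 < y < t`, Fubini turns the double integral of the second term into
`∫₀^∞ T(g y) U'(y) dy` with the tail `T(s) = ∫ₛ^∞ W`, and since `T' = -W`, integration by parts
(without boundary terms, as `U 0 = 0` and `U` has compact support) turns it into
`∫₀^∞ U(y) W(g y) g'(y) dy`.
-/

open MeasureTheory Set Filter Topology Function

section Tail

variable {E : Type*} [NormedAddCommGroup E] {f : ℝ → E}

theorem LocallyIntegrable.integrableOn_Ioi_of_integrableOn_Ioi (hf : LocallyIntegrable f)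
    {a : ℝ} (ha : IntegrableOn f (Ioi a)) (b : ℝ) : IntegrableOn f (Ioi b) :=
  ((hf.integrableOn_isCompact isCompact_Icc).union ha).mono_set fun x (hx : b < x) => by
    rcases le_or_gt x a with hxa | hxa
    exacts [Or.inl ⟨hx.le, hxa⟩, Or.inr hxa]

theorem integrableOn_Ioi_comp_add_right_iff {a c : ℝ} :
    IntegrableOn (fun x => f (x + c)) (Ioi a) ↔ IntegrableOn f (Ioi (a + c)) := by
  simpa [comp_def] using (measurePreserving_add_right volume c).integrableOn_comp_preimage
    (measurableEmbedding_addRight c) (f := f) (s := Ioi (a + c))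

variable [NormedSpace ℝ E]

theorem integral_Ioi_comp_add_right (f : ℝ → E) (a c : ℝ) :
    ∫ x in Ioi a, f (x + c) = ∫ x in Ioi (a + c), f x := by
  simpa using (measurePreserving_add_right volume c).setIntegral_preimage_emb
    (measurableEmbedding_addRight c) f (Ioi (a + c))

variable [CompleteSpace E]

theorem hasDerivAt_integral_Ioi (hf : Continuous f) {a : ℝ} (ha : IntegrableOn f (Ioi a))
    (b : ℝ) : HasDerivAt (fun s => ∫ x in Ioi s, f x) (-f b) b := by
  have hIoi := LocallyIntegrable.integrableOn_Ioi_of_integrableOn_Ioi hf.locallyIntegrable ha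
  have hsplit : (fun s => ∫ x in Ioi s, f x) = fun s => (∫ x in Ioi a, f x) - ∫ x in a..s, f x :=
    funext fun s => by
      rw [← intervalIntegral.integral_Ioi_sub_Ioi' (hIoi a) (hIoi s), sub_sub_cancel]
  rw [hsplit, ← zero_sub]
  exact (hasDerivAt_const b _).sub (hf.integral_hasStrictDerivAt a b).hasDerivAt

theorem continuous_integral_Ioi (hf : Continuous f) {a : ℝ} (ha : IntegrableOn f (Ioi a)) :
    Continuous fun s => ∫ x in Ioi s, f x :=
  continuous_iff_continuousAt.2 fun b => (hasDerivAt_integral_Ioi hf ha b).continuousAt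

end Tail

def lowerTriangle : Set (ℝ × ℝ) := {p | 0 < p.2 ∧ p.2 < p.1}

theorem measurableSet_lowerTriangle : MeasurableSet lowerTriangle :=
  (measurableSet_lt measurable_const measurable_snd).inter
    (measurableSet_lt measurable_snd measurable_fst)

section LowerTriangle

variable {E : Type*} [NormedAddCommGroup E] {f : ℝ → ℝ → E}

theorem indicator_lowerTriangle_apply_left (t y : ℝ) :
    lowerTriangle.indicator (uncurry f) (t, y) = (Ioo 0 t).indicator (f t) y := by
  simp only [indicator_apply, lowerTriangle, mem_ofPred_eq, mem_Ioo, uncurry_apply_pair]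

theorem indicator_lowerTriangle_apply_right (t y : ℝ) :
    lowerTriangle.indicator (uncurry f) (t, y)
      = (Ioi 0).indicator (fun y => (Ioi y).indicator (f · y) t) y := by
  by_cases hy : 0 < y <;> simp [indicator_apply, lowerTriangle, hy]

theorem integral_indicator_lowerTriangle_left [NormedSpace ℝ E] (t : ℝ) :
    ∫ y, lowerTriangle.indicator (uncurry f) (t, y)
      = (Ioi 0).indicator (fun t => ∫ y in 0..t, f t y) t := by
  simp only [indicator_lowerTriangle_apply_left, integral_indicator measurableSet_Ioo]
  rcases le_or_gt t 0 with ht | ht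
  · simp [not_lt.2 ht]
  · rw [indicator_of_mem (mem_Ioi.2 ht), intervalIntegral.integral_of_le ht.le,
      integral_Ioc_eq_integral_Ioo]

theorem integral_indicator_lowerTriangle_right [NormedSpace ℝ E] (y : ℝ) :
    ∫ t, lowerTriangle.indicator (uncurry f) (t, y)
      = (Ioi 0).indicator (fun y => ∫ t in Ioi y, f t y) y := by
  simp only [indicator_lowerTriangle_apply_right]
  by_cases hy : 0 < y <;> simp [hy, integral_indicator measurableSet_Ioi]

theorem integrableOn_lowerTriangle (hf : AEStronglyMeasurable (uncurry f))
    (hslice : ∀ y > 0, IntegrableOn (f · y) (Ioi y))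
    (hnorm : IntegrableOn (fun y => ∫ t in Ioi y, ‖f t y‖) (Ioi 0)) :
    IntegrableOn (uncurry f) lowerTriangle := by
  rw [← integrable_indicator_iff measurableSet_lowerTriangle, Measure.volume_eq_prod,
    integrable_prod_iff' ((hf.indicator measurableSet_lowerTriangle).mono_measure
      (Measure.volume_eq_prod ℝ ℝ).le)]
  refine ⟨ae_of_all _ fun y => ?_, ?_⟩
  · simp only [indicator_lowerTriangle_apply_right]
    by_cases hy : 0 < y
    · simpa [hy, integrable_indicator_iff measurableSet_Ioi] using hslice y hy
    · simp [hy]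
  · simp only [norm_indicator_eq_indicator_norm]
    change Integrable (fun y => ∫ t, lowerTriangle.indicator (uncurry fun t y => ‖f t y‖) (t, y))
    simpa only [integral_indicator_lowerTriangle_right, integrable_indicator_iff measurableSet_Ioi]

theorem integrableOn_Ioi_intervalIntegral_of_integrableOn_lowerTriangle [NormedSpace ℝ E]
    (hf : IntegrableOn (uncurry f) lowerTriangle) :
    IntegrableOn (fun t => ∫ y in 0..t, f t y) (Ioi 0) := by
  rw [← integrable_indicator_iff measurableSet_lowerTriangle, Measure.volume_eq_prod] at hf
  rw [← integrable_indicator_iff measurableSet_Ioi]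
  simpa only [integral_indicator_lowerTriangle_left] using hf.integral_prod_left

theorem integral_Ioi_intervalIntegral_swap [NormedSpace ℝ E]
    (hf : IntegrableOn (uncurry f) lowerTriangle) :
    ∫ t in Ioi 0, ∫ y in 0..t, f t y = ∫ y in Ioi 0, ∫ t in Ioi y, f t y := by
  rw [← integrable_indicator_iff measurableSet_lowerTriangle, Measure.volume_eq_prod] at hf
  rw [← integral_indicator measurableSet_Ioi, ← integral_indicator measurableSet_Ioi]
  simp only [← integral_indicator_lowerTriangle_left, ← integral_indicator_lowerTriangle_right]
  exact integral_integral_swap hf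

end LowerTriangle

theorem integral_Ioi_comp_add_sub_mul_const (f : ℝ → ℝ) (c y v : ℝ) :
    ∫ t in Ioi y, f (t + c - y) * v = (∫ s in Ioi c, f s) * v := by
  simp_rw [integral_mul_const, add_sub_assoc, integral_Ioi_comp_add_right, add_sub_cancel]

section Kernel

variable {W g U : ℝ → ℝ} {a : ℝ}

theorem integrableOn_lowerTriangle_comp_add_sub_mul {V : ℝ → ℝ} (hW : Continuous W)
    (hWi : IntegrableOn W (Ioi a)) (hg : Continuous g) (hV : Continuous V)
    (hVs : HasCompactSupport V) :
    IntegrableOn (uncurry fun t y => W (t + g y - y) * V y) lowerTriangle := by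
  have hIoi := LocallyIntegrable.integrableOn_Ioi_of_integrableOn_Ioi hW.locallyIntegrable hWi
  refine integrableOn_lowerTriangle ?_ (fun y _ => ?_) ?_
  · exact (show Continuous fun p : ℝ × ℝ => W (p.1 + g p.2 - p.2) * V p.2 by fun_prop)
      |>.aestronglyMeasurable
  · simp_rw [add_sub_assoc]
    exact (integrableOn_Ioi_comp_add_right_iff.2 (hIoi _)).mul_const (V y)
  · simp_rw [norm_mul, integral_Ioi_comp_add_sub_mul_const (fun s => ‖W s‖)]
    refine (Continuous.integrable_of_hasCompactSupport ?_ hVs.norm.mul_left).integrableOn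
    exact ((continuous_integral_Ioi hW.norm hWi.norm).comp hg).mul hV.norm

theorem integral_Ioi_integral_Ioi_comp_mul_deriv (hW : Continuous W)
    (hWi : IntegrableOn W (Ioi a)) (hg : ContDiff ℝ 1 g) (hU : ContDiff ℝ 1 U) (hU0 : U 0 = 0)
    (hUs : HasCompactSupport U) :
    ∫ y in Ioi 0, (∫ s in Ioi (g y), W s) * deriv U y
      = ∫ y in Ioi 0, U y * (W (g y) * deriv g y) := by
  set T : ℝ → ℝ := fun y => ∫ s in Ioi (g y), W s
  have hT : ∀ y, HasDerivAt T (-W (g y) * deriv g y) y := fun y =>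
    (hasDerivAt_integral_Ioi hW hWi (g y)).comp y
      ((hg.differentiable one_ne_zero) y).hasDerivAt
  have hTc : Continuous T := continuous_iff_continuousAt.2 fun y => (hT y).continuousAt
  have hU' : ∀ y, HasDerivAt U (deriv U y) y := fun y =>
    ((hU.differentiable one_ne_zero) y).hasDerivAt
  have hTU'i : IntegrableOn (T * deriv U) (Ioi 0) :=
    ((hTc.mul (hU.continuous_deriv le_rfl)).integrable_of_hasCompactSupport
      hUs.deriv.mul_left).integrableOn
  have hT'Ui : IntegrableOn ((fun y => -W (g y) * deriv g y) * U) (Ioi 0) :=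
    ((((hW.comp hg.continuous).neg.mul (hg.continuous_deriv le_rfl)).mul hU.continuous)
      |>.integrable_of_hasCompactSupport hUs.mul_left).integrableOn
  have hTU_zero : Tendsto (T * U) (𝓝[>] 0) (𝓝 0) := by
    simpa [hU0] using ((hTc.mul hU.continuous).tendsto 0).mono_left nhdsWithin_le_nhds
  have hTU_atTop : Tendsto (T * U) atTop (𝓝 0) := by
    have hTUs := hUs.mul_left (f := T)
    rw [hasCompactSupport_iff_eventuallyEq, coclosedCompact_eq_cocompact] at hTUs
    exact (hTUs.filter_mono atTop_le_cocompact).tendsto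
  have hIBP := integral_Ioi_mul_deriv_eq_deriv_mul (fun y _ => hT y) (fun y _ => hU' y)
    hTU'i hT'Ui hTU_zero hTU_atTop
  rw [hIBP, sub_self, zero_sub, ← integral_neg]
  refine setIntegral_congr_fun measurableSet_Ioi fun y _ => ?_
  ring

theorem integral_Ioi_intervalIntegral_comp_add_sub_mul_deriv (hW : Continuous W)
    (hWi : IntegrableOn W (Ioi a)) (hg : ContDiff ℝ 1 g) (hU : ContDiff ℝ 1 U) (hU0 : U 0 = 0)
    (hUs : HasCompactSupport U) :
    ∫ t in Ioi 0, ∫ y in 0..t, W (t + g y - y) * deriv U y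
      = ∫ y in Ioi 0, U y * (W (g y) * deriv g y) := by
  rw [integral_Ioi_intervalIntegral_swap (integrableOn_lowerTriangle_comp_add_sub_mul hW hWi
    hg.continuous (hU.continuous_deriv le_rfl) hUs.deriv),
    ← integral_Ioi_integral_Ioi_comp_mul_deriv hW hWi hg hU hU0 hUs]
  exact setIntegral_congr_fun measurableSet_Ioi fun y _ =>
    integral_Ioi_comp_add_sub_mul_const W (g y) y (deriv U y)

end Kernel

theorem intervalIntegral.integral_mul_deriv_eq_sub_sub_integral_one_sub_mul {h U : ℝ → ℝ}
    (hh : Continuous h) (hU : ContDiff ℝ 1 U) (a b : ℝ) :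
    ∫ y in a..b, h y * deriv U y = U b - U a - ∫ y in a..b, (1 - h y) * deriv U y := by
  have hU' := hU.continuous_deriv le_rfl
  simp_rw [sub_mul (1 : ℝ), one_mul]
  rw [intervalIntegral.integral_sub (hU'.intervalIntegrable a b)
    ((show Continuous fun y => h y * deriv U y by fun_prop).intervalIntegrable a b),
    intervalIntegral.integral_deriv_eq_sub
    (fun x _ => hU.differentiable one_ne_zero x) (hU'.intervalIntegrable a b), sub_sub_cancel]

theorem integration_by_parts_identity_general
    (g : ℝ → ℝ) (hg : ContDiff ℝ 1 g)
    (f1 : ℝ → ℝ) (hf1c : Continuous f1)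
    (F1 : ℝ → ℝ) (hF1 : ∀ t, F1 t = ∫ u in (0:ℝ)..t, f1 u)
    (htail : IntegrableOn (fun t => 1 - F1 t) (Ioi (0:ℝ)))
    (F2 : ℝ → ℝ) (hF2 : ∀ y, F2 y = F1 (g y))
    (U : ℝ → ℝ) (hU : ContDiff ℝ 1 U) (hU0 : U 0 = 0)
    (hUsupp : HasCompactSupport U) :
    ∫ t in Ioi (0:ℝ), (∫ y in (0:ℝ)..t, F1 (t + g y - y) * deriv U y)
      = ∫ y in Ioi (0:ℝ), U y * (F2 y - (deriv g y - 1) * (1 - F2 y)) := by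
  have hF1c : Continuous F1 := by
    simpa only [← funext hF1] using intervalIntegral.continuous_primitive (μ := volume)
      (fun a b => hf1c.intervalIntegrable a b) 0
  have hWc : Continuous fun t => 1 - F1 t := continuous_const.sub hF1c
  have hUi : IntegrableOn U (Ioi 0) :=
    (hU.continuous.integrable_of_hasCompactSupport hUsupp).integrableOn
  have hkernel := integrableOn_Ioi_intervalIntegral_of_integrableOn_lowerTriangle
    (integrableOn_lowerTriangle_comp_add_sub_mul hWc htail hg.continuous
      (hU.continuous_deriv le_rfl) hUsupp.deriv)
  have hRHS : IntegrableOn (fun y => U y * ((1 - F1 (g y)) * deriv g y)) (Ioi 0) :=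
    ((hU.continuous.mul ((hWc.comp hg.continuous).mul (hg.continuous_deriv le_rfl)))
      |>.integrable_of_hasCompactSupport hUsupp.mul_right).integrableOn
  calc ∫ t in Ioi (0:ℝ), (∫ y in (0:ℝ)..t, F1 (t + g y - y) * deriv U y)
      = ∫ t in Ioi (0:ℝ), (U t - ∫ y in (0:ℝ)..t, (1 - F1 (t + g y - y)) * deriv U y) :=
        setIntegral_congr_fun measurableSet_Ioi fun t _ => by
          rw [intervalIntegral.integral_mul_deriv_eq_sub_sub_integral_one_sub_mul
            (by fun_prop) hU, hU0, sub_zero]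
    _ = (∫ y in Ioi (0:ℝ), U y) - ∫ y in Ioi (0:ℝ), U y * ((1 - F1 (g y)) * deriv g y) := by
        rw [integral_sub hUi hkernel, integral_Ioi_intervalIntegral_comp_add_sub_mul_deriv hWc
          htail hg hU hU0 hUsupp]
    _ = ∫ y in Ioi (0:ℝ), U y * (F2 y - (deriv g y - 1) * (1 - F2 y)) := by
        rw [← integral_sub hUi hRHS]
        exact setIntegral_congr_fun measurableSet_Ioi fun y _ => by rw [hF2]; ring

/-- Integration-by-parts identity used in Theorems 1 and 2 of the paper:
`∫₀^∞ ∫₀^t F₁(t + g(y) − y) U'(y) dy dt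
  = ∫₀^∞ U(y) (F₂(y) − (g'(y) − 1)(1 − F₂(y))) dy`
with `F₂ = F₁ ∘ g`. -/
theorem integration_by_parts_identity
    (g : ℝ → ℝ) (hg : ContDiff ℝ 1 g)
    (hgmono : StrictMonoOn g (Ici (0:ℝ))) (hg0 : g 0 = 0)
    (f1 : ℝ → ℝ) (hf1c : Continuous f1) (hf1nn : ∀ u, 0 ≤ f1 u)
    (hf1int : IntegrableOn f1 (Ioi (0:ℝ))) (hf1norm : ∫ u in Ioi (0:ℝ), f1 u = 1)
    (F1 : ℝ → ℝ) (hF1 : ∀ t, F1 t = ∫ u in (0:ℝ)..t, f1 u)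
    (htail : IntegrableOn (fun t => 1 - F1 t) (Ioi (0:ℝ)))
    (F2 : ℝ → ℝ) (hF2 : ∀ y, F2 y = F1 (g y))
    (U : ℝ → ℝ) (hU : ContDiff ℝ 1 U) (hU0 : U 0 = 0)
    (hUsupp : HasCompactSupport U) :
    ∫ t in Ioi (0:ℝ), (∫ y in (0:ℝ)..t, F1 (t + g y - y) * deriv U y)
      = ∫ y in Ioi (0:ℝ), U y * (F2 y - (deriv g y - 1) * (1 - F2 y)) :=
  integration_by_parts_identity_general g hg f1 hf1c F1 hF1 htail F2 hF2 U hU hU0 hUsupp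
end

section
/- Let F₁ and F₂ be continuous c.d.f.s on [0,∞) with continuous positive densities f₁ and f₂, let g : [0,∞) → [0,∞) be strictly increasing with F₁(g(y)) = F₂(y) for all y, and suppose q(y) = (1 − F₂(y)) f₁(y)/f₁(g(y)) is bounded and measurable. Let T₂ be a random variable with c.d.f. F₂ and E[T₂²] < ∞, and define Q(x) = ∫₀^x (1 − F₂(y)) f₁(y)/f₁(g(y)) dy. Then Var(Q(T₂)) = 2 ∫₀^∞ ((1 − F₂(y))²/f₁(g(y))) f₁(y) (∫₀^y (F₂(z)(1 − F₂(z))/f₁(g(z))) f₁(z) dz) dy. -/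
/-!
Write `q` for the integrand of `Q` and `S y = P(T₂ > y) = 1 - F₂ y`. By Tonelli (the layer-cake
formula), `E ∫₀^{T₂} h = ∫₀^∞ S h` for every `h ≥ 0`. Apply it to `h = q`, and, since `Q` is
absolutely continuous so that `Q x ^ 2 = 2 ∫₀^x q Q`, to `h = 2 q Q`. The same identity on the
half-line gives `(∫₀^∞ S q)² = 2 ∫₀^∞ S q(y) ∫₀^y S q`, and subtracting the
two leaves `Var Q(T₂) = 2 ∫₀^∞ S q(y) ∫₀^y (1 - S) q`, which is the claim since `1 - S = F₂`.
-/

open MeasureTheory ProbabilityTheory Set Filter Topology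

theorem sq_intervalIntegral_eq {f : ℝ → ℝ} {a b : ℝ} (hf : IntervalIntegrable f volume a b) :
    (∫ x in a..b, f x) ^ 2 = 2 * ∫ x in a..b, f x * ∫ t in a..x, f t := by
  set F := fun x => ∫ t in a..x, f t
  have hF : AbsolutelyContinuousOnInterval F a b :=
    hf.absolutelyContinuousOnInterval_intervalIntegral left_mem_uIcc
  have key := hF.integral_deriv_mul_eq_sub hF
  simp only [F, intervalIntegral.integral_same, mul_zero, sub_zero] at key
  rw [sq, ← key, ← intervalIntegral.integral_const_mul]
  refine intervalIntegral.integral_congr_ae ?_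
  filter_upwards [hf.ae_hasDerivAt_integral] with x hx hxab
  rw [(hx (uIoc_subset_uIcc hxab) a left_mem_uIcc).deriv]
  ring

theorem IntervalIntegrable.mul_primitive {f : ℝ → ℝ} {a b : ℝ}
    (hf : IntervalIntegrable f volume a b) :
    IntervalIntegrable (fun x => f x * ∫ t in a..x, f t) volume a b :=
  hf.mul_continuousOn (intervalIntegral.continuousOn_primitive_interval' hf left_mem_uIcc)

theorem integrableOn_mul_primitive_Ioi {f : ℝ → ℝ} {a : ℝ}
    (hf : IntegrableOn f (Ioi a)) :
    IntegrableOn (fun x => f x * ∫ t in a..x, f t) (Ioi a) := by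
  set g := (Ioi a).indicator f
  have hg : Integrable g := (integrable_indicator_iff measurableSet_Ioi).2 hf
  have hFg : EqOn (fun x => ∫ t in a..x, g t) (fun x => ∫ t in a..x, f t) (Ioi a) := by
    intro x hx
    simp only [intervalIntegral.integral_of_le (le_of_lt hx), g,
      setIntegral_indicator measurableSet_Ioi, inter_eq_left.2 Ioc_subset_Ioi_self]
  refine Integrable.mul_bdd hf ?_ ((ae_restrict_iff' measurableSet_Ioi).2
    (Eventually.of_forall fun x hx => ?_)) (c := ∫ t in Ioi a, ‖f t‖)
  · exact (intervalIntegral.continuous_primitive (fun _ _ => hg.intervalIntegrable)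
      a).aestronglyMeasurable.congr ((ae_restrict_iff' measurableSet_Ioi).2
        (Eventually.of_forall hFg))
  · calc ‖∫ t in a..x, f t‖ ≤ ∫ t in a..x, ‖f t‖ :=
          intervalIntegral.norm_integral_le_integral_norm (le_of_lt hx)
      _ = ∫ t in Ioc a x, ‖f t‖ := intervalIntegral.integral_of_le (le_of_lt hx)
      _ ≤ ∫ t in Ioi a, ‖f t‖ :=
          setIntegral_mono_set hf.norm (Eventually.of_forall fun _ => norm_nonneg _)
            Ioc_subset_Ioi_self.eventuallyLE

theorem sq_integral_Ioi_eq {f : ℝ → ℝ} {a : ℝ} (hf : IntegrableOn f (Ioi a)) :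
    (∫ x in Ioi a, f x) ^ 2 = 2 * ∫ x in Ioi a, f x * ∫ t in a..x, f t := by
  have hsq : Tendsto (fun b => (∫ x in a..b, f x) ^ 2) atTop (𝓝 ((∫ x in Ioi a, f x) ^ 2)) :=
    (intervalIntegral_tendsto_integral_Ioi a hf tendsto_id).pow 2
  have hprod := (intervalIntegral_tendsto_integral_Ioi a (integrableOn_mul_primitive_Ioi hf)
    tendsto_id).const_mul 2
  refine tendsto_nhds_unique (hsq.congr' ?_) hprod
  filter_upwards [eventually_gt_atTop a] with b hb
  exact sq_intervalIntegral_eq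
    ((intervalIntegrable_iff_integrableOn_Ioc_of_le hb.le).2 (hf.mono_set Ioc_subset_Ioi_self))

section BoundedIntegrand

variable {q : ℝ → ℝ} {C : ℝ}

theorem intervalIntegrable_of_forall_pos_abs_le (q_mble : Measurable q)
    (q_le : ∀ y > 0, |q y| ≤ C) {t : ℝ} (ht : 0 ≤ t) : IntervalIntegrable q volume 0 t :=
  (intervalIntegrable_iff_integrableOn_Ioc_of_le ht).2 <|
    Measure.integrableOn_of_bounded measure_Ioc_lt_top.ne q_mble.aestronglyMeasurable <|
      (ae_restrict_iff' measurableSet_Ioc).2 (Eventually.of_forall fun y hy => q_le y hy.1)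

theorem abs_intervalIntegral_le_of_forall_pos_abs_le (q_le : ∀ y > 0, |q y| ≤ C) {x : ℝ}
    (hx : 0 ≤ x) :
    |∫ y in 0..x, q y| ≤ C * x := by
  simpa [abs_of_nonneg hx] using intervalIntegral.norm_integral_le_of_norm_le_const
    (a := 0) (b := x) (f := q) (C := C) fun y hy => by
      rw [uIoc_of_le hx] at hy; exact q_le y hy.1

theorem intervalIntegral_nonneg_of_forall_pos (q_nn : ∀ y > 0, 0 ≤ q y) {t : ℝ} (ht : 0 ≤ t) :
    0 ≤ ∫ y in 0..t, q y := by
  rw [intervalIntegral.integral_of_le ht]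
  exact setIntegral_nonneg measurableSet_Ioc fun y hy => q_nn y hy.1

theorem monotone_setIntegral_Ioc (q_nn : ∀ y > 0, 0 ≤ q y)
    (q_int : ∀ t, IntegrableOn q (Ioc 0 t)) : Monotone fun x => ∫ y in Ioc 0 x, q y :=
  fun _ b hab => setIntegral_mono_set (q_int b)
    ((ae_restrict_iff' measurableSet_Ioc).2 (Eventually.of_forall fun y hy => q_nn y hy.1))
    (Ioc_subset_Ioc_right hab).eventuallyLE

end BoundedIntegrand

section Layercake

variable {Ω : Type*} [MeasurableSpace Ω] {μ : Measure Ω} {X : Ω → ℝ} {q : ℝ → ℝ} {C : ℝ}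

theorem memLp_two_comp_primitive (X_nn : 0 ≤ᵐ[μ] X) (hX : MemLp X 2 μ) (q_mble : Measurable q)
    (q_nn : ∀ y > 0, 0 ≤ q y) (q_le : ∀ y > 0, |q y| ≤ C) :
    MemLp (fun ω => ∫ y in 0..X ω, q y) 2 μ := by
  have q_int : ∀ t, IntegrableOn q (Ioc 0 t) := fun t => by
    rcases le_total 0 t with ht | ht
    · exact ((intervalIntegrable_iff_integrableOn_Ioc_of_le ht).1
        (intervalIntegrable_of_forall_pos_abs_le q_mble q_le ht))
    · simp [Ioc_eq_empty_of_le ht]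
  have mble : AEStronglyMeasurable (fun ω => ∫ y in 0..X ω, q y) μ := by
    refine ((monotone_setIntegral_Ioc q_nn q_int).measurable.comp_aemeasurable
      hX.1.aemeasurable).aestronglyMeasurable.congr ?_
    filter_upwards [X_nn] with ω (hω : 0 ≤ X ω)
    exact (intervalIntegral.integral_of_le hω).symm
  refine (hX.const_mul C).of_le mble ?_
  filter_upwards [X_nn] with ω (hω : 0 ≤ X ω)
  rw [Real.norm_eq_abs, Real.norm_eq_abs, abs_mul, abs_of_nonneg hω]
  exact (abs_intervalIntegral_le_of_forall_pos_abs_le q_le hω).trans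
    (mul_le_mul_of_nonneg_right (le_abs_self C) hω)

section FiniteMeasure

variable [IsFiniteMeasure μ] {g : ℝ → ℝ}

theorem lintegral_ofReal_meas_lt_mul (X_nn : 0 ≤ᵐ[μ] X) (X_mble : AEMeasurable X μ)
    (g_intble : ∀ t > 0, IntervalIntegrable g volume 0 t)
    (g_nn : ∀ᵐ t ∂volume.restrict (Ioi 0), 0 ≤ g t) :
    ∫⁻ t in Ioi 0, ENNReal.ofReal (μ.real {ω | t < X ω} * g t) =
      ∫⁻ ω, ENNReal.ofReal (∫ t in 0..X ω, g t) ∂μ := by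
  rw [lintegral_comp_eq_lintegral_meas_lt_mul μ X_nn X_mble g_intble g_nn]
  refine lintegral_congr_ae ?_
  filter_upwards [g_nn] with t _
  rw [ENNReal.ofReal_mul measureReal_nonneg, measureReal_def,
    ENNReal.ofReal_toReal (measure_ne_top _ _)]

theorem integrableOn_meas_lt_mul (X_nn : 0 ≤ᵐ[μ] X) (X_mble : AEMeasurable X μ)
    (g_intble : ∀ t > 0, IntervalIntegrable g volume 0 t)
    (g_nn : ∀ᵐ t ∂volume.restrict (Ioi 0), 0 ≤ g t)
    (hG : Integrable (fun ω => ∫ t in 0..X ω, g t) μ) :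
    IntegrableOn (fun t => μ.real {ω | t < X ω} * g t) (Ioi 0) := by
  have tail_mble : Measurable fun t : ℝ => μ.real {ω | t < X ω} :=
    Antitone.measurable fun _ _ hst => measureReal_mono fun _ h => lt_of_le_of_lt hst h
  have g_mble : AEStronglyMeasurable g (volume.restrict (Ioi 0)) := by
    rw [← iUnion_Ioc_eq_Ioi_self_iff.2 fun x _ =>
        (exists_nat_ge x).imp fun n hn => hn.trans (le_add_of_nonneg_right zero_le_one),
      aestronglyMeasurable_iUnion_iff]
    intro n
    exact (g_intble (n + 1) (by positivity)).1.aestronglyMeasurable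
  have integrand_nn : 0 ≤ᵐ[volume.restrict (Ioi 0)] fun t => μ.real {ω | t < X ω} * g t := by
    filter_upwards [g_nn] with t ht using mul_nonneg measureReal_nonneg ht
  refine ⟨tail_mble.aestronglyMeasurable.mul g_mble, ?_⟩
  rw [hasFiniteIntegral_iff_ofReal integrand_nn,
    lintegral_ofReal_meas_lt_mul X_nn X_mble g_intble g_nn]
  exact hG.lintegral_lt_top

theorem integral_comp_eq_integral_meas_lt_mul (X_nn : 0 ≤ᵐ[μ] X) (X_mble : AEMeasurable X μ)
    (g_intble : ∀ t > 0, IntervalIntegrable g volume 0 t)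
    (g_nn : ∀ᵐ t ∂volume.restrict (Ioi 0), 0 ≤ g t)
    (hG : Integrable (fun ω => ∫ t in 0..X ω, g t) μ) :
    ∫ ω, (∫ t in 0..X ω, g t) ∂μ = ∫ t in Ioi 0, μ.real {ω | t < X ω} * g t := by
  have G_nn : 0 ≤ᵐ[μ] fun ω => ∫ t in 0..X ω, g t := by
    filter_upwards [X_nn] with ω (hω : 0 ≤ X ω)
    rw [intervalIntegral.integral_of_le hω]
    exact setIntegral_nonneg_of_ae_restrict
      (ae_restrict_of_ae_restrict_of_subset Ioc_subset_Ioi_self g_nn)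
  have integrand_nn : 0 ≤ᵐ[volume.restrict (Ioi 0)] fun t => μ.real {ω | t < X ω} * g t := by
    filter_upwards [g_nn] with t ht using mul_nonneg measureReal_nonneg ht
  rw [integral_eq_lintegral_of_nonneg_ae G_nn hG.aestronglyMeasurable,
    integral_eq_lintegral_of_nonneg_ae integrand_nn
      (integrableOn_meas_lt_mul X_nn X_mble g_intble g_nn hG).aestronglyMeasurable,
    lintegral_ofReal_meas_lt_mul X_nn X_mble g_intble g_nn]

end FiniteMeasure

theorem variance_comp_primitive [IsProbabilityMeasure μ] (X_nn : 0 ≤ᵐ[μ] X) (hX : MemLp X 2 μ)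
    (q_mble : Measurable q) (q_nn : ∀ y > 0, 0 ≤ q y) (q_le : ∀ y > 0, |q y| ≤ C) :
    variance (fun ω => ∫ y in 0..X ω, q y) μ =
      2 * ∫ y in Ioi 0, μ.real {ω | y < X ω} * q y *
        ∫ z in 0..y, (1 - μ.real {ω | z < X ω}) * q z := by
  set G := fun x => ∫ y in 0..x, q y
  set S := fun y => μ.real {ω | y < X ω}
  have q_int : ∀ t > 0, IntervalIntegrable q volume 0 t :=
    fun t ht => intervalIntegrable_of_forall_pos_abs_le q_mble q_le ht.le
  have q_nn' : ∀ᵐ t ∂volume.restrict (Ioi 0), 0 ≤ q t :=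
    (ae_restrict_iff' measurableSet_Ioi).2 (Eventually.of_forall q_nn)
  have qG_nn : ∀ᵐ t ∂volume.restrict (Ioi 0), 0 ≤ q t * G t :=
    (ae_restrict_iff' measurableSet_Ioi).2 (Eventually.of_forall fun t (ht : 0 < t) =>
      mul_nonneg (q_nn t ht) (intervalIntegral_nonneg_of_forall_pos q_nn ht.le))
  have hGX := memLp_two_comp_primitive X_nn hX q_mble q_nn q_le
  have sq_GX : ∀ᵐ ω ∂μ, G (X ω) ^ 2 = 2 * ∫ y in 0..X ω, q y * G y := by
    filter_upwards [X_nn] with ω (hω : 0 ≤ X ω)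
    exact sq_intervalIntegral_eq (intervalIntegrable_of_forall_pos_abs_le q_mble q_le hω)
  have qG_comp_int : Integrable (fun ω => ∫ y in 0..X ω, q y * G y) μ := by
    refine (hGX.integrable_sq.div_const 2).congr ?_
    filter_upwards [sq_GX] with ω hω
    rw [hω]
    ring
  have qG_int := fun t ht => (q_int t ht).mul_primitive
  have Sq_int := integrableOn_meas_lt_mul X_nn hX.1.aemeasurable q_int q_nn'
    (hGX.integrable one_le_two)
  have first_moment : ∫ ω, G (X ω) ∂μ = ∫ y in Ioi 0, S y * q y :=
    integral_comp_eq_integral_meas_lt_mul X_nn hX.1.aemeasurable q_int q_nn'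
      (hGX.integrable one_le_two)
  have second_moment : ∫ ω, G (X ω) ^ 2 ∂μ = 2 * ∫ y in Ioi 0, S y * (q y * G y) := by
    rw [integral_congr_ae sq_GX, integral_const_mul, integral_comp_eq_integral_meas_lt_mul X_nn
      hX.1.aemeasurable qG_int qG_nn qG_comp_int]
  rw [variance_eq_sub hGX]
  change ∫ ω, G (X ω) ^ 2 ∂μ - (∫ ω, G (X ω) ∂μ) ^ 2 =
    2 * ∫ y in Ioi 0, S y * q y * ∫ z in 0..y, (1 - S z) * q z
  rw [second_moment, first_moment, sq_integral_Ioi_eq Sq_int, ← mul_sub,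
    ← integral_sub (integrableOn_meas_lt_mul X_nn hX.1.aemeasurable qG_int qG_nn qG_comp_int)
      (integrableOn_mul_primitive_Ioi Sq_int)]
  refine congrArg (2 * ·) (setIntegral_congr_fun measurableSet_Ioi fun y (hy : 0 < y) => ?_)
  have inner : ∫ z in 0..y, (1 - S z) * q z = G y - ∫ z in 0..y, S z * q z := by
    rw [← intervalIntegral.integral_sub (q_int y hy)
      ((intervalIntegrable_iff_integrableOn_Ioc_of_le hy.le).2
        (Sq_int.mono_set Ioc_subset_Ioi_self))]
    congr 1 with z
    ring
  simp only [inner]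
  ring

end Layercake

theorem variance_Q_identity_general
    {Ω : Type*} [MeasurableSpace Ω] (μ : Measure Ω) [IsProbabilityMeasure μ]
    (f1 : ℝ → ℝ)
    (hf1nn : ∀ u, 0 ≤ f1 u)
    (F2 : ℝ → ℝ)
    (g : ℝ → ℝ)
    (hqmeas : Measurable fun y => (1 - F2 y) * f1 y / f1 (g y))
    (C : ℝ) (hqbd : ∀ y ≥ (0:ℝ), |(1 - F2 y) * f1 y / f1 (g y)| ≤ C)
    (T2 : Ω → ℝ) (hT2meas : Measurable T2) (hT2nn : ∀ ω, 0 ≤ T2 ω)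
    (hT2cdf : ∀ t, F2 t = (μ {ω | T2 ω ≤ t}).toReal)
    (hT2sq : Integrable (fun ω => (T2 ω) ^ 2) μ)
    (Q : ℝ → ℝ) (hQ : ∀ x, Q x = ∫ y in (0:ℝ)..x, (1 - F2 y) * f1 y / f1 (g y)) :
    variance (fun ω => Q (T2 ω)) μ
      = 2 * ∫ y in Ioi (0:ℝ), ((1 - F2 y) ^ 2 / f1 (g y)) * f1 y
          * (∫ z in (0:ℝ)..y, (F2 z * (1 - F2 z) / f1 (g z)) * f1 z) := by
  have q_nn : ∀ y, 0 ≤ (1 - F2 y) * f1 y / f1 (g y) := fun y =>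
    div_nonneg (mul_nonneg (sub_nonneg.2 (hT2cdf y ▸ measureReal_le_one)) (hf1nn y)) (hf1nn _)
  have tail : ∀ y, μ.real {ω | y < T2 ω} = 1 - F2 y := fun y => by
    rw [hT2cdf y, ← measureReal_def, ← probReal_compl_eq_one_sub (measurableSet_le hT2meas
      measurable_const)]
    simp only [compl_ofPred, not_le]
  have inner : ∀ y, ∫ z in 0..y, (1 - (1 - F2 z)) * ((1 - F2 z) * f1 z / f1 (g z)) =
      ∫ z in 0..y, (F2 z * (1 - F2 z) / f1 (g z)) * f1 z :=
    fun y => intervalIntegral.integral_congr fun z _ => by ring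
  simp only [hQ]
  rw [variance_comp_primitive (Eventually.of_forall hT2nn)
    ((memLp_two_iff_integrable_sq hT2meas.aestronglyMeasurable).2 hT2sq) hqmeas
    (fun y _ => q_nn y) (fun y hy => hqbd y hy.le)]
  simp only [tail, inner]
  refine congrArg (2 * ·) (setIntegral_congr_fun measurableSet_Ioi fun y _ => ?_)
  ring

/-- Variance of `Q(T₂)` in Theorem 2 of the paper:
`Var(Q(T₂)) = 2 ∫₀^∞ ((1−F₂(y))²/f₁(g(y))) f₁(y) (∫₀^y (F₂(z)(1−F₂(z))/f₁(g(z))) f₁(z) dz) dy`,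
where `Q(x) = ∫₀^x (1−F₂(y)) f₁(y)/f₁(g(y)) dy` and `g` is the equivalent-time
function with `F₁(g(y)) = F₂(y)`. -/
theorem variance_Q_identity
    {Ω : Type*} [MeasurableSpace Ω] (μ : Measure Ω) [IsProbabilityMeasure μ]
    (f1 f2 : ℝ → ℝ) (hf1c : Continuous f1) (hf2c : Continuous f2)
    (hf1pos : ∀ u > (0:ℝ), 0 < f1 u) (hf2pos : ∀ u > (0:ℝ), 0 < f2 u)
    (hf1nn : ∀ u, 0 ≤ f1 u) (hf2nn : ∀ u, 0 ≤ f2 u)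
    (F1 F2 : ℝ → ℝ)
    (hF1 : ∀ t, F1 t = ∫ u in (0:ℝ)..t, f1 u)
    (hF2 : ∀ t, F2 t = ∫ u in (0:ℝ)..t, f2 u)
    (hf1norm : ∫ u in Ioi (0:ℝ), f1 u = 1) (hf2norm : ∫ u in Ioi (0:ℝ), f2 u = 1)
    (g : ℝ → ℝ) (hgmono : StrictMonoOn g (Ici (0:ℝ))) (hgmeas : Measurable g)
    (hgequiv : ∀ y ≥ (0:ℝ), F1 (g y) = F2 y)
    (hqmeas : Measurable fun y => (1 - F2 y) * f1 y / f1 (g y))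
    (C : ℝ) (hqbd : ∀ y ≥ (0:ℝ), |(1 - F2 y) * f1 y / f1 (g y)| ≤ C)
    (T2 : Ω → ℝ) (hT2meas : Measurable T2) (hT2nn : ∀ ω, 0 ≤ T2 ω)
    (hT2cdf : ∀ t, F2 t = (μ {ω | T2 ω ≤ t}).toReal)
    (hT2sq : Integrable (fun ω => (T2 ω) ^ 2) μ)
    (Q : ℝ → ℝ) (hQ : ∀ x, Q x = ∫ y in (0:ℝ)..x, (1 - F2 y) * f1 y / f1 (g y)) :
    variance (fun ω => Q (T2 ω)) μ
      = 2 * ∫ y in Ioi (0:ℝ), ((1 - F2 y) ^ 2 / f1 (g y)) * f1 y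
          * (∫ z in (0:ℝ)..y, (F2 z * (1 - F2 z) / f1 (g z)) * f1 z) :=
  variance_Q_identity_general μ f1 hf1nn F2 g hqmeas C hqbd T2 hT2meas hT2nn hT2cdf hT2sq Q hQ
end
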